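/- arXiv:2502.20291 — 3 statements merged into one kernel-verified Lean document; each statement's English description precedes it below -/
import Mathlib

section
/- Let p ≠ 0 in ℝⁿ, and let c, m > 0, λₘ ∈ ℝ, T > 0. Minimizing (over unit vectors α and throttle u ∈ [0,1]) the expression u·(⟨p, α⟩·(T/m) − λₘ·(T/c) + T/c) is achieved by α = −p/‖p‖ together with u = 1 if S > 0 and u = 0 if S < 0, where S = ‖p‖·c/m + λₘ − 1. -/
open scoped RealInnerProductSpace

/-- Minimum-fuel Hamiltonian minimization (primer vector control law): for `p ≠ 0`,
minimizing `u·(⟪p, α⟫·(T/m) − λₘ·(T/c) + T/c)` over unit vectors `α` and throttles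
`u ∈ [0,1]` is achieved by `α = −p/‖p‖` together with `u = 1` if `S > 0` and `u = 0`
if `S < 0`, where `S = ‖p‖·c/m + λₘ − 1`. -/
theorem primer_vector_control_law {n : ℕ} (p : EuclideanSpace ℝ (Fin n)) (hp : p ≠ 0)
    (c m T lm : ℝ) (hc : 0 < c) (hm : 0 < m) (hT : 0 < T)
    (F : ℝ → EuclideanSpace ℝ (Fin n) → ℝ)
    (hF : ∀ u α, F u α = u * (⟪p, α⟫ * (T / m) - lm * (T / c) + T / c))
    (αstar : EuclideanSpace ℝ (Fin n)) (hα : αstar = -(‖p‖⁻¹ • p))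
    (S : ℝ) (hS : S = ‖p‖ * c / m + lm - 1) :
    (0 < S → ∀ u ∈ Set.Icc (0 : ℝ) 1, ∀ α : EuclideanSpace ℝ (Fin n), ‖α‖ = 1 →
        F 1 αstar ≤ F u α) ∧
    (S < 0 → ∀ u ∈ Set.Icc (0 : ℝ) 1, ∀ α : EuclideanSpace ℝ (Fin n), ‖α‖ = 1 →
        F 0 αstar ≤ F u α) := by
  have hp0 : (0:ℝ) < ‖p‖ := norm_pos_iff.mpr hp
  have hip : ⟪p, αstar⟫ = -‖p‖ := by
    rw [hα, inner_neg_right, real_inner_smul_right, real_inner_self_eq_norm_mul_norm]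
    field_simp
  -- key value
  set K : ℝ := -‖p‖ * (T / m) - lm * (T / c) + T / c with hK
  have hFstar : ∀ u, F u αstar = u * K := by
    intro u; rw [hF, hip]
  have hbound : ∀ u ∈ Set.Icc (0:ℝ) 1, ∀ α : EuclideanSpace ℝ (Fin n), ‖α‖ = 1 →
      u * K ≤ F u α := by
    rintro u ⟨hu0, hu1⟩ α hα1
    rw [hF]
    have hcs : -‖p‖ ≤ ⟪p, α⟫ := by
      have := abs_real_inner_le_norm p α
      rw [hα1, mul_one] at this
      linarith [neg_abs_le (⟪p, α⟫)]
    have : K ≤ ⟪p, α⟫ * (T / m) - lm * (T / c) + T / c := by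
      have := mul_le_mul_of_nonneg_right hcs (le_of_lt (div_pos hT hm))
      simp only [hK]; nlinarith
    nlinarith
  have hSK : S * (T / c) = -K := by
    rw [hS, hK]; field_simp; ring
  constructor
  · intro hSpos u hu α hα1
    have hKneg : K < 0 := by
      have : 0 < S * (T / c) := mul_pos hSpos (div_pos hT hc)
      linarith [hSK ▸ this]
    have h1 : F 1 αstar = K := by rw [hFstar]; ring
    have h2 : K ≤ u * K := by nlinarith [hu.1, hu.2]
    calc F 1 αstar = K := h1
      _ ≤ u * K := h2
      _ ≤ F u α := hbound u hu α hα1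
  · intro hSneg u hu α hα1
    have hKpos : 0 < K := by
      have : S * (T / c) < 0 := mul_neg_of_neg_of_pos hSneg (div_pos hT hc)
      linarith [hSK ▸ this]
    have h1 : F 0 αstar = 0 := by rw [hFstar]; ring
    have h2 : (0:ℝ) ≤ u * K := mul_nonneg hu.1 hKpos.le
    calc F 0 αstar = 0 := h1
      _ ≤ u * K := h2
      _ ≤ F u α := hbound u hu α hα1
end

section
/- Let q(δ) = gᵀδ + (1/2)δᵀHδ with H symmetric, let D be positive definite, and let Δ > 0. If δ* minimizes q subject to ‖Dδ‖ ≤ Δ, then there exists γ* ≥ 0 such that (H + γ* D Dᵀ) δ* = −g, H + γ* D Dᵀ is positive semidefinite, and γ*·(‖Dδ*‖ − Δ) = 0. -/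
/-!
Write `c y = yᵀ M y` with `M = D Dᵀ` (which is `DᵀD`, as `D` is symmetric) and `r = Δ²`.
In the interior every direction is feasible, so the gradient `g + H x` vanishes and `H` is
positive semidefinite. On the boundary every direction `w` with `(M x) ⬝ w < 0` is feasible,
so `g + H x` is nonnegative on that open half-space, which forces `g + H x = -γ M x` with
`γ ≥ 0`. Given this multiplier, `q (x + w) - q x = ½ wᵀ(H + γM)w - ½ γ (c (x + w) - c x)`; when
`(M x) ⬝ w ≠ 0` a multiple of `w` leads from `x` to another boundary point, giving
`wᵀ(H + γM)w ≥ 0`, and continuity extends this to the remaining directions.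
-/

open scoped Matrix

/-- Euclidean norm of a vector in `Fin n → ℝ`. -/
noncomputable def enorm {n : ℕ} (v : Fin n → ℝ) : ℝ := Real.sqrt (v ⬝ᵥ v)

open Matrix Filter Topology

section OneDimensional

lemma eventually_mul_add_sq_mul_neg {A : ℝ} (B : ℝ) (hA : A < 0) :
    ∀ᶠ t in 𝓝[>] (0 : ℝ), t * A + t ^ 2 * B < 0 := by
  have hlim : Tendsto (fun t : ℝ => A + t * B) (𝓝[>] 0) (𝓝 A) := by
    have hcont : Continuous fun t : ℝ => A + t * B := by fun_prop
    simpa using (hcont.tendsto 0).mono_left nhdsWithin_le_nhds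
  filter_upwards [hlim.eventually_lt_const hA, self_mem_nhdsWithin] with t hneg (hpos : 0 < t)
  calc t * A + t ^ 2 * B = t * (A + t * B) := by ring
    _ < 0 := mul_neg_of_pos_of_neg hpos hneg

lemma nonneg_of_eventually_nonneg_mul_add_sq_mul {A B : ℝ}
    (h : ∀ᶠ t in 𝓝[>] (0 : ℝ), 0 ≤ t * A + t ^ 2 * B) : 0 ≤ A := by
  by_contra! hA
  obtain ⟨t, hnonneg, hneg⟩ := (h.and (eventually_mul_add_sq_mul_neg B hA)).exists
  linarith

end OneDimensional

section DotProduct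

variable {ι : Type*} [Fintype ι]

lemma dotProduct_self_nonneg (v : ι → ℝ) : 0 ≤ v ⬝ᵥ v :=
  dotProduct_star_self_nonneg v

lemma eq_zero_of_dotProduct_self_nonpos {v : ι → ℝ} (h : v ⬝ᵥ v ≤ 0) : v = 0 :=
  dotProduct_self_eq_zero.1 (h.antisymm (dotProduct_self_nonneg v))

lemma exists_nonneg_eq_neg_smul_of_forall_dotProduct_neg {u a : ι → ℝ} (hu : u ≠ 0)
    (h : ∀ w, u ⬝ᵥ w < 0 → 0 ≤ a ⬝ᵥ w) : ∃ γ : ℝ, 0 ≤ γ ∧ a = -(γ • u) := by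
  have huu : 0 < u ⬝ᵥ u :=
    (dotProduct_self_nonneg u).lt_of_ne' (mt dotProduct_self_eq_zero.1 hu)
  set γ := -(a ⬝ᵥ u) / (u ⬝ᵥ u)
  have hγ : 0 ≤ γ := by
    have := h (-u) (by rw [dotProduct_neg]; linarith)
    rw [dotProduct_neg] at this
    exact div_nonneg this huu.le
  set p := a + γ • u
  have hpu : u ⬝ᵥ p = 0 := by
    simp only [p, γ, dotProduct_add, dotProduct_smul, smul_eq_mul, dotProduct_comm u a]
    field_simp
    ring
  -- `p` is the component of `a` orthogonal to `u`; test `h` on `-(t • p) - t ^ 2 • u`.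
  have hp : p = 0 := by
    refine eq_zero_of_dotProduct_self_nonpos (neg_nonneg.1 ?_)
    refine nonneg_of_eventually_nonneg_mul_add_sq_mul (B := -(a ⬝ᵥ u)) ?_
    filter_upwards [self_mem_nhdsWithin] with t (ht : 0 < t)
    have hap : a ⬝ᵥ p = p ⬝ᵥ p := by
      simp only [p, add_dotProduct, smul_dotProduct, hpu, smul_zero, add_zero]
    have := h (-(t • p) - t ^ 2 • u) (by
      simp only [dotProduct_sub, dotProduct_neg, dotProduct_smul, hpu, smul_eq_mul]
      nlinarith [mul_pos (pow_pos ht 2) huu])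
    simp only [dotProduct_sub, dotProduct_neg, dotProduct_smul, smul_eq_mul, hap] at this
    linarith
  exact ⟨γ, hγ, by rw [← sub_eq_zero, sub_neg_eq_add]; exact hp⟩

lemma Matrix.forall_dotProduct_mulVec_nonneg_of_dotProduct_ne_zero
    {Q : Matrix ι ι ℝ} {u v : ι → ℝ} (hv : u ⬝ᵥ v ≠ 0)
    (h : ∀ w, u ⬝ᵥ w ≠ 0 → 0 ≤ w ⬝ᵥ Q *ᵥ w) (w : ι → ℝ) : 0 ≤ w ⬝ᵥ Q *ᵥ w := by
  by_cases hw : u ⬝ᵥ w = 0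
  · have hcont : Continuous fun s : ℝ => (w + s • v) ⬝ᵥ Q *ᵥ (w + s • v) := by fun_prop
    have hlim := (hcont.tendsto 0).mono_left (nhdsWithin_le_nhds (s := {0}ᶜ))
    rw [zero_smul, add_zero] at hlim
    refine ge_of_tendsto hlim (eventually_nhdsWithin_of_forall fun s (hs : s ≠ 0) => h _ ?_)
    simpa [dotProduct_add, hw] using And.intro hs hv
  · exact h w hw

end DotProduct

section QuadraticModel

variable {ι : Type*} [Fintype ι]

noncomputable def quadModel (g : ι → ℝ) (H : Matrix ι ι ℝ) (x : ι → ℝ) : ℝ :=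
  g ⬝ᵥ x + 1 / 2 * (x ⬝ᵥ H *ᵥ x)

lemma Matrix.IsSymm.add_dotProduct_mulVec_add {H : Matrix ι ι ℝ} (hH : H.IsSymm) (x y : ι → ℝ) :
    (x + y) ⬝ᵥ H *ᵥ (x + y) = x ⬝ᵥ H *ᵥ x + 2 * (H *ᵥ x ⬝ᵥ y) + y ⬝ᵥ H *ᵥ y := by
  have hxy : x ⬝ᵥ H *ᵥ y = H *ᵥ x ⬝ᵥ y := by
    rw [dotProduct_mulVec, ← mulVec_transpose, hH.eq]
  simp only [mulVec_add, dotProduct_add, add_dotProduct, hxy, dotProduct_comm y (H *ᵥ x)]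
  ring

lemma Matrix.IsSymm.add_smul_dotProduct_mulVec_add_smul {H : Matrix ι ι ℝ} (hH : H.IsSymm)
    (x w : ι → ℝ) (t : ℝ) :
    (x + t • w) ⬝ᵥ H *ᵥ (x + t • w) =
      x ⬝ᵥ H *ᵥ x + t * (2 * (H *ᵥ x ⬝ᵥ w)) + t ^ 2 * (w ⬝ᵥ H *ᵥ w) := by
  simp only [hH.add_dotProduct_mulVec_add, mulVec_smul, dotProduct_smul, smul_dotProduct,
    smul_eq_mul]
  ring

variable {g : ι → ℝ} {H M : Matrix ι ι ℝ} {γ : ℝ} {x : ι → ℝ}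

lemma quadModel_add_smul (hH : H.IsSymm) (w : ι → ℝ) (t : ℝ) :
    quadModel g H (x + t • w) =
      quadModel g H x + t * ((g + H *ᵥ x) ⬝ᵥ w) + t ^ 2 * (w ⬝ᵥ H *ᵥ w / 2) := by
  simp only [quadModel, hH.add_smul_dotProduct_mulVec_add_smul, dotProduct_add, add_dotProduct,
    dotProduct_smul, smul_eq_mul]
  ring

lemma quadModel_add_sub_quadModel (hH : H.IsSymm) (hM : M.IsSymm)
    (hstat : (H + γ • M) *ᵥ x = -g) (w : ι → ℝ) :
    quadModel g H (x + w) - quadModel g H x =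
      w ⬝ᵥ (H + γ • M) *ᵥ w / 2 - γ / 2 * ((x + w) ⬝ᵥ M *ᵥ (x + w) - x ⬝ᵥ M *ᵥ x) := by
  have hg : g = -((H + γ • M) *ᵥ x) := by rw [hstat, neg_neg]
  simp only [quadModel, hg, hH.add_dotProduct_mulVec_add, hM.add_dotProduct_mulVec_add,
    add_mulVec, smul_mulVec, neg_dotProduct, add_dotProduct, dotProduct_add, smul_dotProduct,
    dotProduct_smul, smul_eq_mul]
  ring

end QuadraticModel

section Minimizer

variable {ι : Type*} [Fintype ι] {g : ι → ℝ} {H M : Matrix ι ι ℝ} {r γ : ℝ} {x : ι → ℝ}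

lemma gradient_dotProduct_nonneg_of_isMinOn (hH : H.IsSymm)
    (hmin : IsMinOn (quadModel g H) {y | y ⬝ᵥ M *ᵥ y ≤ r} x) {w : ι → ℝ}
    (hw : ∀ᶠ t in 𝓝[>] (0 : ℝ), (x + t • w) ⬝ᵥ M *ᵥ (x + t • w) ≤ r) :
    0 ≤ (g + H *ᵥ x) ⬝ᵥ w := by
  refine nonneg_of_eventually_nonneg_mul_add_sq_mul (B := w ⬝ᵥ H *ᵥ w / 2) ?_
  filter_upwards [hw] with t ht
  have := isMinOn_iff.1 hmin _ ht
  rw [quadModel_add_smul hH] at this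
  linarith

lemma dotProduct_mulVec_nonneg_of_isMinOn (hH : H.IsSymm) (hM : M.IsSymm)
    (hmin : IsMinOn (quadModel g H) {y | y ⬝ᵥ M *ᵥ y ≤ r} x)
    (hstat : (H + γ • M) *ᵥ x = -g) {w : ι → ℝ} {t : ℝ} (ht : t ≠ 0)
    (hfeas : (x + t • w) ⬝ᵥ M *ᵥ (x + t • w) ≤ r)
    (hslack : γ * ((x + t • w) ⬝ᵥ M *ᵥ (x + t • w) - x ⬝ᵥ M *ᵥ x) = 0) :
    0 ≤ w ⬝ᵥ (H + γ • M) *ᵥ w := by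
  have hdecr := quadModel_add_sub_quadModel hH hM hstat (t • w)
  replace hslack : γ / 2 * ((x + t • w) ⬝ᵥ M *ᵥ (x + t • w) - x ⬝ᵥ M *ᵥ x) = 0 := by
    rw [div_mul_eq_mul_div, hslack, zero_div]
  simp only [mulVec_smul, dotProduct_smul, smul_dotProduct, smul_eq_mul, hslack] at hdecr
  have := isMinOn_iff.1 hmin _ hfeas
  refine (mul_nonneg_iff_of_pos_left (mul_self_pos.2 ht)).1 ?_
  linarith

lemma stationary_and_posSemidef_of_isMinOn_of_lt (hH : H.IsSymm) (hM : M.IsSymm)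
    (hmin : IsMinOn (quadModel g H) {y | y ⬝ᵥ M *ᵥ y ≤ r} x) (hlt : x ⬝ᵥ M *ᵥ x < r) :
    H *ᵥ x = -g ∧ H.PosSemidef := by
  have hfeas (w : ι → ℝ) : ∀ᶠ t in 𝓝 (0 : ℝ), (x + t • w) ⬝ᵥ M *ᵥ (x + t • w) ≤ r := by
    have hcont : Continuous fun t : ℝ => (x + t • w) ⬝ᵥ M *ᵥ (x + t • w) := by fun_prop
    have hlim := hcont.tendsto 0
    rw [zero_smul, add_zero] at hlim
    exact (hlim.eventually_lt_const hlt).mono fun _ => le_of_lt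
  have hgrad : g + H *ᵥ x = 0 := by
    have := gradient_dotProduct_nonneg_of_isMinOn hH hmin
      ((hfeas (-(g + H *ᵥ x))).filter_mono nhdsWithin_le_nhds)
    rw [dotProduct_neg, neg_nonneg] at this
    exact eq_zero_of_dotProduct_self_nonpos this
  have hstat : (H + (0 : ℝ) • M) *ᵥ x = -g := by
    rw [zero_smul, add_zero, ← sub_eq_zero, sub_neg_eq_add, add_comm, hgrad]
  refine ⟨by simpa using hstat, posSemidef_iff_dotProduct_mulVec.2 ⟨by simpa using hH, fun w => ?_⟩⟩
  obtain ⟨t, hfeas_t, ht⟩ :=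
    (((hfeas w).filter_mono nhdsWithin_le_nhds).and (self_mem_nhdsWithin (s := {0}ᶜ))).exists
  simpa using dotProduct_mulVec_nonneg_of_isMinOn hH hM hmin hstat ht hfeas_t (zero_mul _)

lemma exists_stationary_and_posSemidef_of_isMinOn_of_eq (hH : H.IsSymm) (hM : M.PosSemidef)
    (hmin : IsMinOn (quadModel g H) {y | y ⬝ᵥ M *ᵥ y ≤ r} x) (hr : 0 < r)
    (heq : x ⬝ᵥ M *ᵥ x = r) :
    ∃ γ : ℝ, 0 ≤ γ ∧ (H + γ • M) *ᵥ x = -g ∧ (H + γ • M).PosSemidef := by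
  have hMs : M.IsSymm := by simpa using hM.isHermitian
  set u := M *ᵥ x
  have hu (w : ι → ℝ) : u ⬝ᵥ w = x ⬝ᵥ M *ᵥ w := by
    rw [dotProduct_mulVec, ← mulVec_transpose, hMs.eq, dotProduct_comm]
  have hux : u ⬝ᵥ x = r := by rw [hu, heq]
  have hdescent (w : ι → ℝ) (hw : u ⬝ᵥ w < 0) : 0 ≤ (g + H *ᵥ x) ⬝ᵥ w := by
    refine gradient_dotProduct_nonneg_of_isMinOn hH hmin ?_
    filter_upwards [eventually_mul_add_sq_mul_neg (w ⬝ᵥ M *ᵥ w) (by linarith : 2 * (u ⬝ᵥ w) < 0)]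
      with t ht
    rw [hMs.add_smul_dotProduct_mulVec_add_smul, heq]
    linarith
  obtain ⟨γ, hγ, hgrad⟩ := exists_nonneg_eq_neg_smul_of_forall_dotProduct_neg
    (fun h => by simp [h] at hux; linarith) hdescent
  have hstat : (H + γ • M) *ᵥ x = -g := by
    rw [add_mulVec, smul_mulVec]
    linear_combination (norm := module) hgrad
  refine ⟨γ, hγ, hstat, posSemidef_iff_dotProduct_mulVec.2 ⟨by simpa using hH.add (hMs.smul γ),
    forall_dotProduct_mulVec_nonneg_of_dotProduct_ne_zero (hux.trans_ne hr.ne') fun w hw => ?_⟩⟩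
  have hwMw : w ⬝ᵥ M *ᵥ w ≠ 0 := fun h => hw <| by
    rw [hu, (hM.dotProduct_mulVec_zero_iff w).1 h, dotProduct_zero]
  -- the secant through `x` in direction `w` meets the boundary again at `x + t • w`
  set t := -(2 * (u ⬝ᵥ w)) / (w ⬝ᵥ M *ᵥ w)
  have ht : t ≠ 0 := div_ne_zero (by simpa using hw) hwMw
  have hsphere : (x + t • w) ⬝ᵥ M *ᵥ (x + t • w) = x ⬝ᵥ M *ᵥ x := by
    rw [hMs.add_smul_dotProduct_mulVec_add_smul]
    simp only [t, u]
    field_simp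
    ring
  exact dotProduct_mulVec_nonneg_of_isMinOn hH hMs hmin hstat ht (hsphere.trans heq).le
    (by rw [hsphere, sub_self, mul_zero])

theorem exists_trustRegion_multiplier_of_isMinOn (hH : H.IsSymm) (hM : M.PosSemidef) (hr : 0 < r)
    (hx : x ⬝ᵥ M *ᵥ x ≤ r) (hmin : IsMinOn (quadModel g H) {y | y ⬝ᵥ M *ᵥ y ≤ r} x) :
    ∃ γ : ℝ, 0 ≤ γ ∧ (H + γ • M) *ᵥ x = -g ∧ (H + γ • M).PosSemidef ∧
      γ * (x ⬝ᵥ M *ᵥ x - r) = 0 := by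
  rcases hx.lt_or_eq with hlt | heq
  · obtain ⟨hstat, hpsd⟩ :=
      stationary_and_posSemidef_of_isMinOn_of_lt hH (by simpa using hM.isHermitian) hmin hlt
    exact ⟨0, le_rfl, by simpa using hstat, by simpa using hpsd, zero_mul _⟩
  · obtain ⟨γ, hγ, hstat, hpsd⟩ :=
      exists_stationary_and_posSemidef_of_isMinOn_of_eq hH hM hmin hr heq
    exact ⟨γ, hγ, hstat, hpsd, by rw [heq, sub_self, mul_zero]⟩

end Minimizer

/-- Necessary conditions for the trust-region subproblem (Theorem 1 of the PDDP paper,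
Conn–Gould–Toint Cor. 7.2.2): if `δ*` globally minimizes
`q(δ) = gᵀδ + (1/2)δᵀHδ` subject to `‖Dδ‖ ≤ Δ`, then there is `γ* ≥ 0` with
`(H + γ* D Dᵀ) δ* = −g`, `H + γ* D Dᵀ` positive semidefinite, and
`γ*·(‖Dδ*‖ − Δ) = 0`. -/
theorem trust_region_necessary {n : ℕ}
    (g : Fin n → ℝ) (H D : Matrix (Fin n) (Fin n) ℝ)
    (hH : H.IsSymm) (hD : D.PosDef) (Δ : ℝ) (hΔ : 0 < Δ)
    (q : (Fin n → ℝ) → ℝ)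
    (hq : ∀ δ, q δ = g ⬝ᵥ δ + (1 / 2) * (δ ⬝ᵥ H.mulVec δ))
    (δstar : Fin n → ℝ)
    (hfeas : _root_.enorm (D.mulVec δstar) ≤ Δ)
    (hmin : ∀ δ : Fin n → ℝ, _root_.enorm (D.mulVec δ) ≤ Δ → q δstar ≤ q δ) :
    ∃ γstar : ℝ, 0 ≤ γstar ∧
      (H + γstar • (D * Dᵀ)).mulVec δstar = -g ∧
      (H + γstar • (D * Dᵀ)).PosSemidef ∧
      γstar * (_root_.enorm (D.mulVec δstar) - Δ) = 0 := by
  obtain rfl : q = quadModel g H := funext hq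
  have hDt : Dᵀ = D := (by simpa using hD.isHermitian : D.IsSymm).eq
  have hform (δ : Fin n → ℝ) : δ ⬝ᵥ (D * Dᵀ) *ᵥ δ = D *ᵥ δ ⬝ᵥ D *ᵥ δ := by
    rw [← mulVec_mulVec, dotProduct_mulVec, ← mulVec_transpose, hDt]
  have hball (δ : Fin n → ℝ) : _root_.enorm (D *ᵥ δ) ≤ Δ ↔ δ ⬝ᵥ (D * Dᵀ) *ᵥ δ ≤ Δ ^ 2 := by
    rw [hform, _root_.enorm, Real.sqrt_le_left hΔ.le]
  obtain ⟨γ, hγ, hstat, hpsd, hslack⟩ := exists_trustRegion_multiplier_of_isMinOn hH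
    (by simpa using posSemidef_self_mul_conjTranspose D) (by positivity) ((hball _).1 hfeas)
    (isMinOn_iff.2 fun δ hδ => hmin δ ((hball δ).2 hδ))
  refine ⟨γ, hγ, hstat, hpsd, ?_⟩
  rcases mul_eq_zero.1 hslack with hγ0 | hboundary
  · rw [hγ0, zero_mul]
  · rw [hform, sub_eq_zero] at hboundary
    rw [_root_.enorm, hboundary, Real.sqrt_sq hΔ.le, sub_self, mul_zero]
end

section
/- Conversely, if (H + γ D Dᵀ) δ = −g with H + γ D Dᵀ positive semidefinite, γ ≥ 0, ‖Dδ‖ ≤ Δ, and γ·(‖Dδ‖ − Δ) = 0, then δ is a global minimizer of q(δ') = gᵀδ' + (1/2)δ'ᵀHδ' over the set {δ' : ‖Dδ'‖ ≤ Δ}. -/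
/-! Put `M = H + γ D Dᵀ`. Since `D` is symmetric, `q δ' = m δ' - (γ / 2) ‖D δ'‖²` with
`m δ' = gᵀδ' + ½ δ'ᵀ M δ'`, a convex quadratic whose critical point `δ` is a global minimizer.
Complementarity gives `γ ‖D δ‖² = γ Δ²`, while feasibility gives `γ ‖D δ'‖² ≤ γ Δ²`, so
`q δ = m δ - γ Δ² / 2 ≤ m δ' - γ Δ² / 2 ≤ q δ'`. -/

open scoped Matrix

noncomputable def euclNorm {n : ℕ} (v : Fin n → ℝ) : ℝ := Real.sqrt (v ⬝ᵥ v)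

open Matrix

section QuadraticModel

variable {ι R : Type*} [Fintype ι]

theorem two_mul_dotProduct_add_dotProduct_mulVec_eq [CommRing R] {M : Matrix ι ι R}
    (hM : M.IsSymm) {g δ : ι → R} (hsys : M *ᵥ δ = -g) (x : ι → R) :
    2 * (g ⬝ᵥ x) + x ⬝ᵥ M *ᵥ x =
      2 * (g ⬝ᵥ δ) + δ ⬝ᵥ M *ᵥ δ + (x - δ) ⬝ᵥ M *ᵥ (x - δ) := by
  have hcross : δ ⬝ᵥ M *ᵥ x = x ⬝ᵥ M *ᵥ δ := by
    rw [dotProduct_mulVec, ← mulVec_transpose, hM.eq, dotProduct_comm]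
  have hg : ∀ y, y ⬝ᵥ M *ᵥ δ = -(g ⬝ᵥ y) := fun y => by
    rw [hsys, dotProduct_neg, dotProduct_comm]
  rw [mulVec_sub, sub_dotProduct, dotProduct_sub, dotProduct_sub, hcross, hg, hg]
  ring

theorem quadratic_le_of_mulVec_eq_neg {M : Matrix ι ι ℝ} (hM : M.PosSemidef) {g δ : ι → ℝ}
    (hsys : M *ᵥ δ = -g) (x : ι → ℝ) :
    g ⬝ᵥ δ + (1 / 2) * (δ ⬝ᵥ M *ᵥ δ) ≤ g ⬝ᵥ x + (1 / 2) * (x ⬝ᵥ M *ᵥ x) := by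
  have hsymm : M.IsSymm := isHermitian_iff_isSymm.mp hM.isHermitian
  have hnonneg : 0 ≤ (x - δ) ⬝ᵥ M *ᵥ (x - δ) := by
    simpa using hM.dotProduct_mulVec_nonneg (x - δ)
  linarith [two_mul_dotProduct_add_dotProduct_mulVec_eq hsymm hsys x]

theorem dotProduct_mul_transpose_mulVec [CommSemiring R] (D : Matrix ι ι R) (x : ι → R) :
    x ⬝ᵥ (D * Dᵀ) *ᵥ x = (Dᵀ *ᵥ x) ⬝ᵥ (Dᵀ *ᵥ x) := by
  rw [← mulVec_mulVec, dotProduct_mulVec, ← mulVec_transpose]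

end QuadraticModel

theorem euclNorm_sq {n : ℕ} (v : Fin n → ℝ) : euclNorm v ^ 2 = v ⬝ᵥ v :=
  Real.sq_sqrt (dotProduct_self_star_nonneg v)

theorem trust_region_sufficient_general {n : ℕ}
    (g : Fin n → ℝ) (H D : Matrix (Fin n) (Fin n) ℝ)
    (hD : D.PosDef) (Δ : ℝ)
    (q : (Fin n → ℝ) → ℝ)
    (hq : ∀ δ', q δ' = g ⬝ᵥ δ' + (1 / 2) * (δ' ⬝ᵥ H.mulVec δ'))
    (γ : ℝ) (hγ : 0 ≤ γ) (δ : Fin n → ℝ)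
    (hsys : (H + γ • (D * Dᵀ)).mulVec δ = -g)
    (hpsd : (H + γ • (D * Dᵀ)).PosSemidef)
    (hcomp : γ * (euclNorm (D.mulVec δ) - Δ) = 0) :
    ∀ δ' : Fin n → ℝ, euclNorm (D.mulVec δ') ≤ Δ → q δ ≤ q δ' := by
  intro x hx_feas
  have hDt : Dᵀ = D := isHermitian_iff_isSymm.mp hD.isHermitian
  have hq_shift : ∀ y, q y = g ⬝ᵥ y + (1 / 2) * (y ⬝ᵥ (H + γ • (D * Dᵀ)) *ᵥ y)
      - γ / 2 * euclNorm (D *ᵥ y) ^ 2 := fun y => by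
    rw [hq, euclNorm_sq, add_mulVec, dotProduct_add, smul_mulVec, dotProduct_smul,
      dotProduct_mul_transpose_mulVec, hDt, smul_eq_mul]
    ring
  have hδ : γ * euclNorm (D *ᵥ δ) ^ 2 = γ * Δ ^ 2 := by
    rcases mul_eq_zero.mp hcomp with h | h
    · simp [h]
    · rw [sub_eq_zero.mp h]
  have hx : γ * euclNorm (D *ᵥ x) ^ 2 ≤ γ * Δ ^ 2 :=
    mul_le_mul_of_nonneg_left (pow_le_pow_left₀ (Real.sqrt_nonneg _) hx_feas 2) hγ
  rw [hq_shift, hq_shift]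
  linarith [quadratic_le_of_mulVec_eq_neg hpsd hsys x]

/-- Sufficiency direction of the trust-region optimality conditions: if
`(H + γ D Dᵀ) δ = −g` with `H + γ D Dᵀ` positive semidefinite, `γ ≥ 0`,
`‖Dδ‖ ≤ Δ` and `γ·(‖Dδ‖ − Δ) = 0`, then `δ` globally minimizes
`q(δ') = gᵀδ' + (1/2)δ'ᵀHδ'` over `{δ' : ‖Dδ'‖ ≤ Δ}`. -/
theorem trust_region_sufficient {n : ℕ}
    (g : Fin n → ℝ) (H D : Matrix (Fin n) (Fin n) ℝ)
    (hH : H.IsSymm) (hD : D.PosDef) (Δ : ℝ) (hΔ : 0 < Δ)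
    (q : (Fin n → ℝ) → ℝ)
    (hq : ∀ δ', q δ' = g ⬝ᵥ δ' + (1 / 2) * (δ' ⬝ᵥ H.mulVec δ'))
    (γ : ℝ) (hγ : 0 ≤ γ) (δ : Fin n → ℝ)
    (hsys : (H + γ • (D * Dᵀ)).mulVec δ = -g)
    (hpsd : (H + γ • (D * Dᵀ)).PosSemidef)
    (hfeas : euclNorm (D.mulVec δ) ≤ Δ)
    (hcomp : γ * (euclNorm (D.mulVec δ) - Δ) = 0) :
    ∀ δ' : Fin n → ℝ, euclNorm (D.mulVec δ') ≤ Δ → q δ ≤ q δ' :=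
  trust_region_sufficient_general g H D hD Δ q hq γ hγ δ hsys hpsd hcomp
end
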